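/- The tropical (max-plus) map on ℝ^2 given by T(Z,W) = (Z', W') where Z' = max(max(Z,0)+W, 0) − Z and W' = 2*max(W,0) + max(Z,0) − 2Z − W satisfies T^4 = id; that is, every orbit is periodic with period dividing 4. -/

import Mathlib

/-- The tropical (max-plus) version of the deformed D4 map. -/
def tropMap (p : ℝ × ℝ) : ℝ × ℝ :=
  (max (max p.1 0 + p.2) 0 - p.1,
    2 * max p.2 0 + max p.1 0 - 2 * p.1 - p.2)

/-!
`T` is linear on each of the five cones cut out by the lines `Z = 0`, `W = 0` and the ray
`Z + W = 0, Z ≥ 0`. Refining them by the preimages under `T`, `T²`, `T³` splits the plane into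
eight cones; on each of them `T⁴` is a product of four of these linear maps, and following the
orbit of the cone shows that the product is the identity.
-/

section Pieces

variable {a b : ℝ}

theorem tropMap_of_nonneg_of_nonneg (ha : 0 ≤ a) (hb : 0 ≤ b) : tropMap (a, b) = (b, b - a) := by
  rw [tropMap, max_eq_left ha, max_eq_left hb, max_eq_left (add_nonneg ha hb)]
  congr 1 <;> ring

theorem tropMap_of_nonpos_of_add_nonneg (hb : b ≤ 0) (hab : 0 ≤ a + b) :
    tropMap (a, b) = (b, -a - b) := by
  rw [tropMap, max_eq_left (by linarith : (0 : ℝ) ≤ a), max_eq_right hb, max_eq_left hab]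
  congr 1 <;> ring

theorem tropMap_of_nonneg_of_add_nonpos (ha : 0 ≤ a) (hab : a + b ≤ 0) :
    tropMap (a, b) = (-a, -a - b) := by
  rw [tropMap, max_eq_left ha, max_eq_right (by linarith : b ≤ 0), max_eq_right hab]
  congr 1 <;> ring

theorem tropMap_of_nonpos_of_nonpos (ha : a ≤ 0) (hb : b ≤ 0) :
    tropMap (a, b) = (-a, -2 * a - b) := by
  rw [tropMap, max_eq_right ha, max_eq_right hb, zero_add, max_eq_right hb]
  congr 1 <;> ring

theorem tropMap_of_nonpos_of_nonneg (ha : a ≤ 0) (hb : 0 ≤ b) :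
    tropMap (a, b) = (b - a, b - 2 * a) := by
  rw [tropMap, max_eq_right ha, max_eq_left hb, zero_add, max_eq_left hb]
  congr 1; ring

end Pieces

-- The eight cones on which `T⁴` is linear, in counterclockwise order.
theorem tropMap_cones_cover (x y : ℝ) :
    (0 ≤ y ∧ 2 * y ≤ x) ∨ (y ≤ x ∧ x ≤ 2 * y) ∨ (x ≤ y ∧ y ≤ 2 * x) ∨ (0 ≤ x ∧ 2 * x ≤ y) ∨
      (x ≤ 0 ∧ 0 ≤ y) ∨ (x ≤ 0 ∧ y ≤ 0) ∨ (0 ≤ x ∧ x + y ≤ 0) ∨ (y ≤ 0 ∧ 0 ≤ x + y) := by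
  grind

/-- Every orbit of the tropical map is periodic with period dividing 4: T⁴ = id. -/
theorem tropMap_periodic_four (p : ℝ × ℝ) : tropMap^[4] p = p := by
  obtain ⟨x, y⟩ := p
  show tropMap (tropMap (tropMap (tropMap (x, y)))) = (x, y)
  rcases tropMap_cones_cover x y with h | h | h | h | h | h | h | h
  all_goals
    simp (disch := grind) only [tropMap_of_nonneg_of_nonneg, tropMap_of_nonpos_of_add_nonneg,
      tropMap_of_nonneg_of_add_nonpos, tropMap_of_nonpos_of_nonpos, tropMap_of_nonpos_of_nonneg]
    congr 1 <;> ring
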